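/- arXiv:2208.13357 — 2 statements merged into one kernel-verified Lean document; each statement's English description precedes it below -/
import Mathlib

section
/- For every integer m ≥ 15, the 2-color Ramsey numbers satisfy R(m, m) ≥ R(m+2, 3) + m + 1. -/
/-- An edge `r`-coloring of the complete graph on `Fin n` admits, for some color `s`,
a monochromatic set of size `i s` in color `s`. -/
def RamseyProp {r : ℕ} (n : ℕ) (i : Fin r → ℕ) : Prop :=
  ∀ c : Sym2 (Fin n) → Fin r, ∃ s : Fin r, ∃ S : Finset (Fin n),
    S.card = i s ∧ ∀ x ∈ S, ∀ y ∈ S, x ≠ y → c s(x, y) = s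

/-- The `r`-color Ramsey number `R(i 0, …, i (r-1))`: the least `n` such that every
edge `r`-coloring of `K_n` has a monochromatic `K_{i s}` in some color `s`. -/
noncomputable def ramseyNumber {r : ℕ} (i : Fin r → ℕ) : ℕ :=
  sInf {n | RamseyProp n i}

lemma ramsey_pullback {r n N : ℕ} {i : Fin r → ℕ} (H : RamseyProp n i)
    (f : Fin n ↪ Fin N) (c : Sym2 (Fin N) → Fin r) :
    ∃ s : Fin r, ∃ S : Finset (Fin N), S.card = i s ∧ (∀ x ∈ S, ∃ j, f j = x) ∧
      ∀ x ∈ S, ∀ y ∈ S, x ≠ y → c s(x, y) = s := by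
  obtain ⟨s, S, hcard, hmono⟩ := H (fun p => c (Sym2.map f p))
  refine ⟨s, S.map f, by simp [hcard], by simp, ?_⟩
  intro x hx y hy hxy
  simp only [Finset.mem_map] at hx hy
  obtain ⟨a, ha, rfl⟩ := hx
  obtain ⟨b, hb, rfl⟩ := hy
  have hab : a ≠ b := fun h => hxy (by rw [h])
  have := hmono a ha b hb hab
  simpa using this

lemma ramsey_mono {r n N : ℕ} {i : Fin r → ℕ} (h : n ≤ N) (H : RamseyProp n i) :
    RamseyProp N i := by
  intro c
  obtain ⟨s, S, hcard, -, hmono⟩ := ramsey_pullback H (Fin.castLEEmb h) c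
  exact ⟨s, S, hcard, hmono⟩

lemma ramsey_step {a b n₁ n₂ : ℕ} (hpos : 1 ≤ n₁)
    (h1 : RamseyProp n₁ ![a, b + 1]) (h2 : RamseyProp n₂ ![a + 1, b]) :
    RamseyProp (n₁ + n₂) ![a + 1, b + 1] := by
  classical
  intro c
  have two : ∀ x : Fin 2, x = 0 ∨ x = 1 := by decide
  set v : Fin (n₁ + n₂) := ⟨0, by omega⟩ with hv
  set N0 : Finset (Fin (n₁ + n₂)) := Finset.univ.filter (fun u => u ≠ v ∧ c s(u, v) = 0) with hN0
  set N1 : Finset (Fin (n₁ + n₂)) := Finset.univ.filter (fun u => u ≠ v ∧ c s(u, v) = 1) with hN1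
  have hdisj : Disjoint N0 N1 := by
    rw [Finset.disjoint_left]
    intro u hu0 hu1
    simp only [hN0, hN1, Finset.mem_filter] at hu0 hu1
    rw [hu0.2.2] at hu1
    exact absurd hu1.2.2 (by decide)
  have hunion : N0 ∪ N1 = Finset.univ.erase v := by
    ext u
    simp only [hN0, hN1, Finset.mem_union, Finset.mem_filter, Finset.mem_univ, true_and,
      Finset.mem_erase, and_true]
    rcases two (c s(u, v)) with h | h <;> tauto
  have hcards : N0.card + N1.card = n₁ + n₂ - 1 := by
    rw [← Finset.card_union_of_disjoint hdisj, hunion,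
      Finset.card_erase_of_mem (Finset.mem_univ v), Finset.card_univ, Fintype.card_fin]
  have hcase : n₁ ≤ N0.card ∨ n₂ ≤ N1.card := by omega
  rcases hcase with hca | hcb
  · obtain ⟨T, hTsub, hTcard⟩ := Finset.exists_subset_card_eq hca
    let e := T.orderIsoOfFin hTcard
    let f : Fin n₁ ↪ Fin (n₁ + n₂) :=
      ⟨fun j => (e j : Fin (n₁ + n₂)), fun j k h => e.injective (Subtype.ext h)⟩
    obtain ⟨s, S, hcard, hrange, hmono⟩ := ramsey_pullback h1 f c
    have hS0 : ∀ x ∈ S, x ∈ N0 := by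
      intro x hx
      obtain ⟨j, rfl⟩ := hrange x hx
      exact hTsub (e j).2
    rcases two s with rfl | rfl
    · have hvS : v ∉ S := by
        intro hv'
        have h := hS0 v hv'
        simp only [hN0, Finset.mem_filter] at h
        exact h.2.1 rfl
      refine ⟨0, insert v S, ?_, ?_⟩
      · rw [Finset.card_insert_of_notMem hvS]
        simp only [Matrix.cons_val_zero] at hcard ⊢
        omega
      · intro x hx y hy hxy
        rcases Finset.mem_insert.mp hx with rfl | hx' <;>
          rcases Finset.mem_insert.mp hy with rfl | hy'
        · exact absurd rfl hxy
        · have hy0 := hS0 y hy'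
          simp only [hN0, Finset.mem_filter] at hy0
          rw [Sym2.eq_swap]
          exact hy0.2.2
        · have hx0 := hS0 x hx'
          simp only [hN0, Finset.mem_filter] at hx0
          exact hx0.2.2
        · exact hmono x hx' y hy' hxy
    · exact ⟨1, S, by simpa using hcard, hmono⟩
  · obtain ⟨T, hTsub, hTcard⟩ := Finset.exists_subset_card_eq hcb
    let e := T.orderIsoOfFin hTcard
    let f : Fin n₂ ↪ Fin (n₁ + n₂) :=
      ⟨fun j => (e j : Fin (n₁ + n₂)), fun j k h => e.injective (Subtype.ext h)⟩
    obtain ⟨s, S, hcard, hrange, hmono⟩ := ramsey_pullback h2 f c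
    have hS1 : ∀ x ∈ S, x ∈ N1 := by
      intro x hx
      obtain ⟨j, rfl⟩ := hrange x hx
      exact hTsub (e j).2
    rcases two s with rfl | rfl
    · exact ⟨0, S, by simpa using hcard, hmono⟩
    · have hvS : v ∉ S := by
        intro hv'
        have h := hS1 v hv'
        simp only [hN1, Finset.mem_filter] at h
        exact h.2.1 rfl
      refine ⟨1, insert v S, ?_, ?_⟩
      · rw [Finset.card_insert_of_notMem hvS]
        simp only [Matrix.cons_val_one, Matrix.head_cons, Matrix.cons_val_zero] at hcard ⊢
        omega
      · intro x hx y hy hxy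
        rcases Finset.mem_insert.mp hx with rfl | hx' <;>
          rcases Finset.mem_insert.mp hy with rfl | hy'
        · exact absurd rfl hxy
        · have hy1 := hS1 y hy'
          simp only [hN1, Finset.mem_filter] at hy1
          rw [Sym2.eq_swap]
          exact hy1.2.2
        · have hx1 := hS1 x hx'
          simp only [hN1, Finset.mem_filter] at hx1
          exact hx1.2.2
        · exact hmono x hx' y hy' hxy

lemma ramsey_one_left (b : ℕ) : RamseyProp 1 ![1, b + 1] := by
  intro c
  refine ⟨0, {0}, by simp, ?_⟩
  intro x hx y hy hxy
  exact absurd (Subsingleton.elim x y) hxy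

lemma ramsey_one_right (a : ℕ) : RamseyProp 1 ![a + 1, 1] := by
  intro c
  refine ⟨1, {0}, by simp, ?_⟩
  intro x hx y hy hxy
  exact absurd (Subsingleton.elim x y) hxy

lemma ramsey_upper : ∀ a b : ℕ, RamseyProp ((a + b).choose a) ![a + 1, b + 1] := by
  intro a
  induction a with
  | zero =>
    intro b
    have h : (0 + b).choose 0 = 1 := Nat.choose_zero_right _
    rw [h]
    exact ramsey_one_left b
  | succ a iha =>
    intro b
    induction b with
    | zero =>
      have h : (a + 1 + 0).choose (a + 1) = 1 := Nat.choose_self _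
      rw [h]
      exact ramsey_one_right (a + 1)
    | succ b ihb =>
      have key : (a + 1 + (b + 1)).choose (a + 1)
          = (a + (b + 1)).choose a + (a + 1 + b).choose (a + 1) := by
        rw [show a + 1 + (b + 1) = (a + b + 1) + 1 by omega, Nat.choose_succ_succ]
        congr 2 <;> omega
      rw [key]
      exact ramsey_step (Nat.choose_pos (by omega)) (iha (b + 1)) ihb

lemma ramsey_lower (d : ℕ) (hd : 1 ≤ d) : ¬ RamseyProp (d * d) ![d + 1, d + 1] := by
  classical
  intro H
  have hsymm : ∀ x y : Fin (d * d),
      (if x.val / d = y.val / d then (0 : Fin 2) else 1)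
        = (if y.val / d = x.val / d then (0 : Fin 2) else 1) := by
    intro x y
    rcases eq_or_ne (x.val / d) (y.val / d) with h | h
    · rw [if_pos h, if_pos h.symm]
    · rw [if_neg h, if_neg (fun hh => h hh.symm)]
  obtain ⟨s, S, hcard, hmono⟩ :=
    H (Sym2.lift ⟨fun x y => if x.val / d = y.val / d then (0 : Fin 2) else 1, hsymm⟩)
  have two : ∀ x : Fin 2, x = 0 ∨ x = 1 := by decide
  rcases two s with rfl | rfl
  · -- all in same block; mod d is injective on S
    have hcard' : S.card = d + 1 := by simpa using hcard
    have hle : S.card ≤ (Finset.range d).card := by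
      apply Finset.card_le_card_of_injOn (fun x => x.val % d)
      · intro x hx
        simp only [Finset.mem_coe, Finset.mem_range]
        exact Nat.mod_lt _ (by omega)
      · intro x hx y hy hxy
        by_contra hne
        have hc := hmono x hx y hy hne
        simp only [Sym2.lift_mk] at hc
        have hdiv : x.val / d = y.val / d := by
          by_contra h
          rw [if_neg h] at hc
          exact absurd hc (by decide)
        have h1 := Nat.div_add_mod x.val d
        have h2 := Nat.div_add_mod y.val d
        rw [hdiv] at h1
        have : x.val = y.val := by
          simp only at hxy
          omega
        exact hne (Fin.ext this)
    rw [hcard', Finset.card_range] at hle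
    omega
  · -- all in different blocks; div d is injective on S
    have hcard' : S.card = d + 1 := by simpa using hcard
    have hle : S.card ≤ (Finset.range d).card := by
      apply Finset.card_le_card_of_injOn (fun x => x.val / d)
      · intro x hx
        simp only [Finset.mem_coe, Finset.mem_range]
        exact Nat.div_lt_of_lt_mul x.isLt
      · intro x hx y hy hxy
        by_contra hne
        have hc := hmono x hx y hy hne
        simp only [Sym2.lift_mk] at hc
        simp only at hxy
        rw [if_pos hxy] at hc
        exact absurd hc (by decide)
    rw [hcard', Finset.card_range] at hle
    omega

/-- For `m ≥ 15`, `R(m, m) ≥ R(m+2, 3) + m + 1`. -/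
theorem ramsey_diag_ge_m_add_two_three (m : ℕ) (hm : 15 ≤ m) :
    ramseyNumber ![m, m] ≥ ramseyNumber ![m + 2, 3] + m + 1 := by
  obtain ⟨d, rfl⟩ : ∃ d, m = d + 1 := ⟨m - 1, by omega⟩
  have hd : 14 ≤ d := by omega
  have hub : ramseyNumber ![d + 1 + 2, 3] ≤ (d + 4).choose (d + 2) :=
    Nat.sInf_le (ramsey_upper (d + 2) 2)
  have hne : {n | RamseyProp n ![d + 1, d + 1]}.Nonempty :=
    ⟨(d + d).choose d, ramsey_upper d d⟩
  have hmem : RamseyProp (ramseyNumber ![d + 1, d + 1]) ![d + 1, d + 1] := Nat.sInf_mem hne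
  have hgt : d * d < ramseyNumber ![d + 1, d + 1] := by
    by_contra h
    push_neg at h
    exact ramsey_lower d (by omega) (ramsey_mono h hmem)
  have hch : (d + 4).choose (d + 2) * 2 = (d + 4) * (d + 3) := by
    have h1 : (d + 4).choose (d + 2) = (d + 4).choose 2 := by
      have h2 := Nat.choose_symm (show 2 ≤ d + 4 by omega)
      rwa [show d + 4 - 2 = d + 2 by omega] at h2
    rw [h1, Nat.choose_two_right, show d + 4 - 1 = d + 3 by omega]
    refine Nat.div_mul_cancel ?_
    rw [mul_comm]
    exact (Nat.even_mul_succ_self (d + 3)).two_dvd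
  have h14 : 14 * d ≤ d * d := Nat.mul_le_mul hd (le_refl d)
  nlinarith [hub, hgt, hch, h14]
end

section
/- For every integer m ≥ 23, the 2-color Ramsey numbers satisfy R(m, m) ≥ R(m+1, 4) + m. -/
open Finset

lemma ramseyMono {r : ℕ} {n n' : ℕ} {i : Fin r → ℕ} (h : n ≤ n') (H : RamseyProp n i) :
    RamseyProp n' i := by
  intro c
  obtain ⟨s, S, hcard, hmono⟩ := H (fun e => c (e.map (Fin.castLE h)))
  refine ⟨s, S.map (Fin.castLEEmb h), by simpa using hcard, ?_⟩
  intro x hx y hy hxy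
  obtain ⟨a, ha, rfl⟩ := Finset.mem_map.1 hx
  obtain ⟨b, hb, rfl⟩ := Finset.mem_map.1 hy
  have hab : a ≠ b := fun hh => hxy (by rw [hh])
  have := hmono a ha b hb hab
  simpa [Sym2.map_pair_eq] using this


lemma fin2_cases (x : Fin 2) : x = 0 ∨ x = 1 := by omega

lemma ramsey_exists : ∀ (k a b : ℕ), a + b = k → ∀ {n : ℕ} (c : Sym2 (Fin n) → Fin 2)
    (A : Finset (Fin n)), (a + b).choose a ≤ A.card →
    ∃ S ⊆ A, (S.card = a + 1 ∧ ∀ x ∈ S, ∀ y ∈ S, x ≠ y → c s(x, y) = 0) ∨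
             (S.card = b + 1 ∧ ∀ x ∈ S, ∀ y ∈ S, x ≠ y → c s(x, y) = 1) := by
  intro k
  induction k using Nat.strong_induction_on with
  | _ k IH =>
    intro a b hab n c A hA
    have hA1 : 1 ≤ A.card := le_trans (Nat.choose_pos (Nat.le_add_right a b)) hA
    obtain ⟨v, hv⟩ := Finset.card_pos.1 hA1
    match a, b with
    | 0, b =>
      refine ⟨{v}, by simpa using hv, Or.inl ⟨by simp, ?_⟩⟩
      intro x hx y hy hxy
      simp only [Finset.mem_singleton] at hx hy
      exact absurd (hx.trans hy.symm) hxy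
    | a + 1, 0 =>
      refine ⟨{v}, by simpa using hv, Or.inr ⟨by simp, ?_⟩⟩
      intro x hx y hy hxy
      simp only [Finset.mem_singleton] at hx hy
      exact absurd (hx.trans hy.symm) hxy
    | a + 1, b + 1 =>
      set A0 := (A.erase v).filter (fun u => c s(v, u) = 0) with hA0
      set A1 := (A.erase v).filter (fun u => c s(v, u) = 1) with hA1'
      have hsplit : (A.erase v).card ≤ A0.card + A1.card := by
        refine le_trans (Finset.card_le_card ?_) (Finset.card_union_le _ _)
        intro u hu
        rcases fin2_cases (c s(v, u)) with h | h
        · exact Finset.mem_union_left _ (Finset.mem_filter.2 ⟨hu, h⟩)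
        · exact Finset.mem_union_right _ (Finset.mem_filter.2 ⟨hu, h⟩)
      have hpascal : (a + 1 + (b + 1)).choose (a + 1)
          = (a + (b + 1)).choose a + (a + 1 + b).choose (a + 1) := by
        have h1 : a + 1 + (b + 1) = (a + b + 1) + 1 := by omega
        rw [h1, Nat.choose_succ_succ]
        congr 2 <;> omega
      have hcard : (A.erase v).card = A.card - 1 := Finset.card_erase_of_mem hv
      have hor : (a + (b + 1)).choose a ≤ A0.card ∨ (a + 1 + b).choose (a + 1) ≤ A1.card := by
        omega
      -- helper to build the clique with v inserted
      have hins : ∀ (Ai : Finset (Fin n)) (col : Fin 2), Ai = (A.erase v).filter (fun u => c s(v, u) = col) →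
          ∀ S ⊆ Ai, ∀ m, S.card = m → (∀ x ∈ S, ∀ y ∈ S, x ≠ y → c s(x, y) = col) →
          ∃ T ⊆ A, T.card = m + 1 ∧ ∀ x ∈ T, ∀ y ∈ T, x ≠ y → c s(x, y) = col := by
        rintro Ai col rfl S hS m hm hmono
        have hvS : v ∉ S := fun hvs => by
          have := Finset.mem_erase.1 (Finset.mem_filter.1 (hS hvs)).1
          exact this.1 rfl
        have hSA : S ⊆ A := fun x hx => Finset.mem_of_mem_erase (Finset.mem_filter.1 (hS hx)).1
        refine ⟨insert v S, ?_, by rw [Finset.card_insert_of_notMem hvS, hm], ?_⟩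
        · exact Finset.insert_subset hv hSA
        · intro x hx y hy hxy
          rcases Finset.mem_insert.1 hx with rfl | hx'
          · rcases Finset.mem_insert.1 hy with rfl | hy'
            · exact absurd rfl hxy
            · exact (Finset.mem_filter.1 (hS hy')).2
          · rcases Finset.mem_insert.1 hy with rfl | hy'
            · rw [Sym2.eq_swap]; exact (Finset.mem_filter.1 (hS hx')).2
            · exact hmono x hx' y hy' hxy
      rcases hor with h | h
      · obtain ⟨S, hSsub, hS⟩ := IH (a + b + 1) (by omega) a (b + 1) rfl c A0 h
        rcases hS with ⟨h1, h2⟩ | ⟨h1, h2⟩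
        · obtain ⟨T, hT, hTc, hTm⟩ := hins A0 0 rfl S hSsub (a + 1) h1 h2
          exact ⟨T, hT, Or.inl ⟨hTc, hTm⟩⟩
        · refine ⟨S, ?_, Or.inr ⟨h1, h2⟩⟩
          exact hSsub.trans (fun x hx => Finset.mem_of_mem_erase (Finset.mem_filter.1 hx).1)
      · obtain ⟨S, hSsub, hS⟩ := IH (a + b + 1) (by omega) (a + 1) b (by omega) c A1 h
        rcases hS with ⟨h1, h2⟩ | ⟨h1, h2⟩
        · refine ⟨S, ?_, Or.inl ⟨h1, h2⟩⟩
          exact hSsub.trans (fun x hx => Finset.mem_of_mem_erase (Finset.mem_filter.1 hx).1)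
        · obtain ⟨T, hT, hTc, hTm⟩ := hins A1 1 rfl S hSsub (b + 1) h1 h2
          exact ⟨T, hT, Or.inr ⟨hTc, hTm⟩⟩

lemma no_ramsey (m N : ℕ) (hm : 6 ≤ m) (hmN : m ≤ N)
    (hN : 4 * N.choose m ≤ 2 ^ m.choose 2) : ¬ RamseyProp N ![m, m] := by
  classical
  intro H
  set E := Fintype.card (Sym2 (Fin N)) with hE
  set c₂ := m.choose 2 with hc₂
  -- the "bad" set for a given S, s
  let B : Finset (Fin N) → Fin 2 → Finset (Sym2 (Fin N) → Fin 2) := fun S s =>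
    univ.filter (fun c => ∀ x ∈ S, ∀ y ∈ S, x ≠ y → c s(x, y) = s)
  have hBcard : ∀ S : Finset (Fin N), S.card = m → ∀ s, (B S s).card ≤ 2 ^ (E - c₂) := by
    intro S hSm s
    set P : Finset (Sym2 (Fin N)) := S.offDiag.image Sym2.mk.uncurry with hP
    have hPcard : P.card = c₂ := by
      rw [hP, Sym2.card_image_offDiag, hSm]
    have hPmem : ∀ e ∈ P, ∃ x ∈ S, ∃ y ∈ S, x ≠ y ∧ e = s(x, y) := by
      intro e he
      obtain ⟨p, hp, rfl⟩ := Finset.mem_image.1 he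
      obtain ⟨h1, h2, h3⟩ := Finset.mem_offDiag.1 hp
      exact ⟨p.1, h1, p.2, h2, h3, rfl⟩
    have hinj : (B S s).card ≤ Fintype.card ({e : Sym2 (Fin N) // e ∉ P} → Fin 2) := by
      rw [← Finset.card_univ]
      apply Finset.card_le_card_of_injOn (fun c => fun e => c e.1)
        (fun c _ => Finset.mem_univ _)
      intro c1 hc1 c2 hc2 hfe
      have hc1' := (Finset.mem_filter.1 hc1).2
      have hc2' := (Finset.mem_filter.1 hc2).2
      funext e
      by_cases heP : e ∈ P
      · obtain ⟨x, hx, y, hy, hxy, rfl⟩ := hPmem e heP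
        rw [hc1' x hx y hy hxy, hc2' x hx y hy hxy]
      · exact congrFun hfe ⟨e, heP⟩
    have hcardsub : Fintype.card ({e : Sym2 (Fin N) // e ∉ P} → Fin 2) = 2 ^ (E - c₂) := by
      rw [Fintype.card_fun, Fintype.card_fin]
      congr 1
      rw [Fintype.card_subtype_compl, Fintype.card_coe, hPcard]
    rwa [hcardsub] at hinj
  -- bad colorings
  set Bad : Finset (Sym2 (Fin N) → Fin 2) :=
    (univ : Finset (Fin 2)).biUnion (fun s => (univ.powersetCard m).biUnion (fun S => B S s))
    with hBad
  have hBadcard : Bad.card ≤ 2 * N.choose m * 2 ^ (E - c₂) := by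
    calc Bad.card ≤ ∑ s : Fin 2, ((univ.powersetCard m).biUnion (fun S => B S s)).card :=
          Finset.card_biUnion_le
      _ ≤ ∑ s : Fin 2, ∑ S ∈ univ.powersetCard m, (B S s).card := by
          exact Finset.sum_le_sum (fun s _ => Finset.card_biUnion_le)
      _ ≤ ∑ s : Fin 2, ∑ S ∈ univ.powersetCard m, 2 ^ (E - c₂) := by
          refine Finset.sum_le_sum (fun s _ => Finset.sum_le_sum (fun S hS => ?_))
          exact hBcard S (Finset.mem_powersetCard_univ.1 hS) s
      _ = 2 * N.choose m * 2 ^ (E - c₂) := by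
          simp [Finset.sum_const, Finset.card_powersetCard, mul_assoc]
  have hc₂E : c₂ ≤ E := by
    rw [hE, Sym2.card, Fintype.card_fin]
    exact Nat.choose_le_choose 2 (by omega)
  have htot : (univ : Finset (Sym2 (Fin N) → Fin 2)).card = 2 ^ E := by
    rw [Finset.card_univ, Fintype.card_fun, Fintype.card_fin]
  have hlt : Bad.card < (univ : Finset (Sym2 (Fin N) → Fin 2)).card := by
    have h1 : 2 * Bad.card ≤ 4 * N.choose m * 2 ^ (E - c₂) := by
      have := Nat.mul_le_mul_left 2 hBadcard
      calc 2 * Bad.card ≤ 2 * (2 * N.choose m * 2 ^ (E - c₂)) := this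
        _ = 4 * N.choose m * 2 ^ (E - c₂) := by ring
    have h2 : 4 * N.choose m * 2 ^ (E - c₂) ≤ 2 ^ c₂ * 2 ^ (E - c₂) :=
      Nat.mul_le_mul_right _ hN
    have h3 : 2 ^ c₂ * 2 ^ (E - c₂) = 2 ^ E := by
      rw [← pow_add]
      congr 1
      omega
    have h4 : (0:ℕ) < 2 ^ E := pow_pos (by norm_num) _
    have h5 : 2 * Bad.card ≤ 2 ^ E := le_trans h1 (h3 ▸ h2)
    omega
  obtain ⟨c, hc⟩ := Finset.card_pos.1 (by rw [Finset.card_sdiff_of_subset (Finset.subset_univ Bad)]; omega :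
    (0 : ℕ) < ((univ : Finset (Sym2 (Fin N) → Fin 2)) \ Bad).card)
  have hcBad : c ∉ Bad := (Finset.mem_sdiff.1 hc).2
  obtain ⟨s, S, hScard, hSmono⟩ := H c
  have hms : (![m, m] : Fin 2 → ℕ) s = m := by fin_cases s <;> rfl
  apply hcBad
  rw [hBad]
  refine Finset.mem_biUnion.2 ⟨s, Finset.mem_univ _, Finset.mem_biUnion.2
    ⟨S, Finset.mem_powersetCard_univ.2 (by rw [hScard, hms]), ?_⟩⟩
  exact Finset.mem_filter.2 ⟨Finset.mem_univ _, hSmono⟩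


lemma poly_le (m : ℕ) (hm : 23 ≤ m) :
    ((m + 1) * (m + 2) * (m + 3) + 6 * m) ^ 2 ≤ 36 * 2 ^ m := by
  induction m, hm using Nat.le_induction with
  | base => norm_num
  | succ m hm IH =>
    obtain ⟨k, rfl⟩ : ∃ k, m = k + 23 := ⟨m - 23, by omega⟩
    have h57 : 5 * ((k + 23 + 2) * (k + 23 + 3) * (k + 23 + 4) + 6 * (k + 23 + 1)) ≤
        7 * ((k + 23 + 1) * (k + 23 + 2) * (k + 23 + 3) + 6 * (k + 23)) := by
      zify; nlinarith [sq_nonneg k, Int.natCast_nonneg k]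
    have hsq : ((k + 23 + 2) * (k + 23 + 3) * (k + 23 + 4) + 6 * (k + 23 + 1)) ^ 2 ≤
        2 * ((k + 23 + 1) * (k + 23 + 2) * (k + 23 + 3) + 6 * (k + 23)) ^ 2 := by nlinarith [h57]
    calc ((k + 23 + 1 + 1) * (k + 23 + 1 + 2) * (k + 23 + 1 + 3) + 6 * (k + 23 + 1)) ^ 2
        = ((k + 23 + 2) * (k + 23 + 3) * (k + 23 + 4) + 6 * (k + 23 + 1)) ^ 2 := by ring
      _ ≤ 2 * ((k + 23 + 1) * (k + 23 + 2) * (k + 23 + 3) + 6 * (k + 23)) ^ 2 := hsq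
      _ ≤ 2 * (36 * 2 ^ (k + 23)) := by omega
      _ = 36 * 2 ^ (k + 23 + 1) := by ring

lemma two_pow_le_factorial (n : ℕ) : 2 ^ n ≤ (n + 1).factorial := by
  induction n with
  | zero => simp
  | succ n IH =>
    rw [pow_succ, Nat.factorial_succ]
    calc 2 ^ n * 2 ≤ (n + 1).factorial * 2 := Nat.mul_le_mul_right _ IH
      _ = 2 * (n + 1).factorial := by ring
      _ ≤ (n + 2) * (n + 1).factorial := Nat.mul_le_mul_right _ (by omega)

lemma four_choose_le (m N : ℕ) (hm : 23 ≤ m) (hN2 : N ^ 2 ≤ 2 ^ m) :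
    4 * N.choose m ≤ 2 ^ m.choose 2 := by
  set a := N.choose m with ha
  set c₂ := m.choose 2 with hc₂
  have hdesc : 2 * c₂ = m * (m - 1) := by
    have h1 : m.descFactorial 2 = 2 * c₂ := by
      rw [Nat.descFactorial_eq_factorial_mul_choose, hc₂]; norm_num [Nat.factorial]
    have h2 : m.descFactorial 2 = (m - 1) * (m * 1) := by
      simp [Nat.descFactorial_succ, Nat.descFactorial_zero]
    rw [← h1, h2, mul_one, Nat.mul_comm]
  have hmm : 2 * c₂ + m = m * m := by
    rw [hdesc]
    cases m with
    | zero => simp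
    | succ m' => simp only [Nat.succ_sub_one]; ring
  have h1 : a * 2 ^ (m - 1) ≤ N ^ m := by
    have e1 : a * m.factorial ≤ N ^ m := by
      rw [ha, mul_comm, ← Nat.descFactorial_eq_factorial_mul_choose]
      exact Nat.descFactorial_le_pow _ _
    have e2 : 2 ^ (m - 1) ≤ m.factorial := by
      have h := two_pow_le_factorial (m - 1)
      have hm1 : m - 1 + 1 = m := by omega
      rwa [hm1] at h
    calc a * 2 ^ (m - 1) ≤ a * m.factorial := Nat.mul_le_mul_left _ e2
      _ ≤ N ^ m := e1
  have h2 : (N ^ m) ^ 2 ≤ 2 ^ (m * m) := by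
    calc (N ^ m) ^ 2 = (N ^ 2) ^ m := by ring
      _ ≤ (2 ^ m) ^ m := Nat.pow_le_pow_left hN2 m
      _ = 2 ^ (m * m) := by rw [← pow_mul]
  have key : (4 * a) ^ 2 * 2 ^ (2 * m - 2) ≤ (2 ^ c₂) ^ 2 * 2 ^ (2 * m - 2) := by
    have lhs : (4 * a) ^ 2 * 2 ^ (2 * m - 2) = 16 * (a * 2 ^ (m - 1)) ^ 2 := by
      have ht : (m - 1) * 2 = 2 * m - 2 := by omega
      rw [mul_pow, mul_pow, ← pow_mul, ht]; ring
    have rhs : (2 ^ c₂) ^ 2 * 2 ^ (2 * m - 2) = 2 ^ (2 * c₂ + (2 * m - 2)) := by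
      rw [← pow_mul, ← pow_add, mul_comm c₂ 2]
    rw [lhs, rhs]
    calc 16 * (a * 2 ^ (m - 1)) ^ 2 ≤ 16 * (N ^ m) ^ 2 :=
          Nat.mul_le_mul_left _ (Nat.pow_le_pow_left h1 2)
      _ ≤ 16 * 2 ^ (m * m) := Nat.mul_le_mul_left _ h2
      _ = 2 ^ (m * m + 4) := by rw [pow_add]; ring
      _ ≤ 2 ^ (2 * c₂ + (2 * m - 2)) := Nat.pow_le_pow_right (by norm_num) (by omega)
  have key2 : (4 * a) ^ 2 ≤ (2 ^ c₂) ^ 2 :=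
    Nat.le_of_mul_le_mul_right key (pow_pos (by norm_num) _)
  exact (Nat.pow_le_pow_iff_left (by norm_num)).1 key2

lemma ramseyProp_of_choose (a b n : ℕ) (h : (a + b).choose a ≤ n) :
    RamseyProp n ![a + 1, b + 1] := by
  intro c
  obtain ⟨S, _, hS⟩ := ramsey_exists (a + b) a b rfl c Finset.univ
    (by simpa using h)
  rcases hS with ⟨h1, h2⟩ | ⟨h1, h2⟩
  · exact ⟨0, S, by simpa using h1, h2⟩
  · exact ⟨1, S, by simpa using h1, h2⟩

lemma six_choose_three (m : ℕ) : 6 * (m + 3).choose m = (m + 1) * (m + 2) * (m + 3) := by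
  have hsymm : (m + 3).choose m = (m + 3).choose 3 := by
    have := Nat.choose_symm (show 3 ≤ m + 3 by omega)
    simpa using this
  have hdesc : (m + 3).descFactorial 3 = 6 * (m + 3).choose 3 := by
    rw [Nat.descFactorial_eq_factorial_mul_choose]; norm_num [Nat.factorial]
  have hdesc2 : (m + 3).descFactorial 3 = (m + 1) * ((m + 2) * ((m + 3) * 1)) := by
    simp [Nat.descFactorial_succ, Nat.descFactorial_zero]
  rw [hsymm, ← hdesc, hdesc2]; ring

/-- For `m ≥ 23`, `R(m, m) ≥ R(m+1, 4) + m`. -/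
theorem ramsey_diag_ge_m_add_one_four (m : ℕ) (hm : 23 ≤ m) :
    ramseyNumber ![m, m] ≥ ramseyNumber ![m + 1, 4] + m := by
  have hC3pos : 0 < (m + 3).choose m := Nat.choose_pos (by omega)
  set C3 := (m + 3).choose m with hC3
  set N := C3 + m - 1 with hN
  -- the Ramsey number for (m+1, 4) is at most C3
  have hk : ramseyNumber ![m + 1, 4] ≤ C3 := by
    apply Nat.sInf_le
    exact ramseyProp_of_choose m 3 C3 le_rfl
  -- N² ≤ 2^m
  have hN2 : N ^ 2 ≤ 2 ^ m := by
    have h6N : 6 * N ≤ (m + 1) * (m + 2) * (m + 3) + 6 * m := by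
      have := six_choose_three m
      omega
    have hpoly := poly_le m hm
    have h36 : (6 * N) ^ 2 ≤ 36 * 2 ^ m :=
      le_trans (Nat.pow_le_pow_left h6N 2) hpoly
    have : 36 * N ^ 2 ≤ 36 * 2 ^ m := by
      calc 36 * N ^ 2 = (6 * N) ^ 2 := by ring
        _ ≤ 36 * 2 ^ m := h36
    omega
  have hmN : m ≤ N := by omega
  have hnot : ¬ RamseyProp N ![m, m] :=
    no_ramsey m N (by omega) hmN (four_choose_le m N hm hN2)
  -- the set of Ramsey witnesses for (m, m) is nonempty
  have hne : {n | RamseyProp n ![m, m]}.Nonempty := by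
    refine ⟨(m - 1 + (m - 1)).choose (m - 1), ?_⟩
    have h := ramseyProp_of_choose (m - 1) (m - 1) _ le_rfl
    have hm1 : m - 1 + 1 = m := by omega
    rwa [hm1] at h
  refine le_csInf hne ?_
  intro n hn
  by_contra hcon
  push_neg at hcon
  have hnN : n ≤ N := by omega
  exact hnot (ramseyMono hnN hn)
end
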